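/- arXiv:1905.13152 — 3 statements merged into one kernel-verified Lean document; each statement's English description precedes it below -/
import Mathlib

section
/- Let λ_1,…,λ_d∈ℂ∖{0} be one-resonant of index (1,…,1), i.e. λ^m=λ_j for m∈ℕ^d and j∈{1,…,d} if and only if m=(q,…,q)+e_j for some q∈ℕ. Then the following are equivalent: (1) for every j∈{1,…,d}, Σ_{m≥1}2^{−m}log(1/ω_j(2^m))<∞, where ω_j(r):=min({|λ^α−λ_i| : 2≤|α|≤r, α_j=0, 1≤i≤d, i≠j}∪{1}); (2) for every j∈{1,…,d}, the set M_j:={α∈ℕ^d : α_j=0} is a Brjuno set for (λ_1,…,λ_d); (3) for every q∈ℕ, the set A_q:={β∈ℕ^d : |β|>qd+1, min{β_1,…,β_d}=q} is a Brjuno set for (λ_1,…,λ_d). -/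
open Complex Metric Set Filter Topology Asymptotics

noncomputable section

/-- The product `π(z) = z^1 ⋯ z^d`. -/
def pprod {d : ℕ} (z : Fin d → ℂ) : ℂ := ∏ j, z j

/-- The normal form `F_N(z) = Λz·(1 − π(z)^k/(kd))`. -/
def FN {d : ℕ} (lam : Fin d → ℂ) (k : ℕ) (z : Fin d → ℂ) : Fin d → ℂ :=
  fun j => lam j * z j * (1 - pprod z ^ k / ((k : ℂ) * (d : ℂ)))

/-- One-resonance of index `(1,…,1)`: `λ^m = λ_j` iff `m = (q,…,q) + e_j`. -/
def OneResonant {d : ℕ} (lam : Fin d → ℂ) : Prop :=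
  ∀ (m : Fin d → ℕ) (j : Fin d),
    (∏ i, lam i ^ m i) = lam j ↔ ∃ q : ℕ, ∀ i, m i = q + if i = j then 1 else 0

/-- `F` is of the form (*): `F(z) = F_N(z) + O(‖z‖^l)` as `z → 0`. -/
def FormStar {d : ℕ} (lam : Fin d → ℂ) (k l : ℕ) (F : (Fin d → ℂ) → (Fin d → ℂ)) : Prop :=
  (fun z => F z - FN lam k z) =O[𝓝 (0 : Fin d → ℂ)] fun z => ‖z‖ ^ l

/-- The attracting sector `S_h(R,θ)`; the argument condition `|arg u − 2πh/k| < θ`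
is expressed mod `2π` by rotating `u` by `e^{-2πih/k}`. -/
def Ssector (k h : ℕ) (R θ : ℝ) : Set ℂ :=
  {u | ‖u ^ k - 1 / (2 * R)‖ < 1 / (2 * R) ∧
    |Complex.arg (u * Complex.exp ((-(2 * Real.pi * (h : ℝ) / (k : ℝ)) : ℝ) * Complex.I))| < θ}

/-- `W(β) = {z : |z^j| < |π(z)|^β for all j}`. -/
def Wset (d : ℕ) (β : ℝ) : Set (Fin d → ℂ) :=
  {z | ∀ j, ‖z j‖ < ‖pprod z‖ ^ β}

/-- The local basin `B_h(R,θ,β)`. -/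
def Bset (d k h : ℕ) (R θ β : ℝ) : Set (Fin d → ℂ) :=
  {z | z ∈ Wset d β ∧ pprod z ∈ Ssector k h R θ}

/-- The local basin hypothesis for the constants `(R₀, θ₀, β₀)`. -/
def LocalBasinHyp (d k l : ℕ) (F : (Fin d → ℂ) → (Fin d → ℂ)) (R0 θ0 β0 : ℝ) : Prop :=
  0 < R0 ∧ θ0 ∈ Ioo 0 (Real.pi / (2 * (k : ℝ))) ∧ β0 ∈ Ioo 0 (1 / (d : ℝ)) ∧
    (2 * (k : ℝ) + 1) < β0 * ((l : ℝ) + (d : ℝ) - 1) ∧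
    ∀ h : ℕ, h < k →
      MapsTo F (Bset d k h R0 θ0 β0) (Bset d k h R0 θ0 β0) ∧
      TendstoUniformlyOn (fun n z => F^[n] z) (fun _ => 0) atTop (Bset d k h R0 θ0 β0)

/-- The global basin `Ω_h = ⋃ₙ F^{-n}(B_h)`. -/
def GlobalBasin (d k : ℕ) (F : (Fin d → ℂ) → (Fin d → ℂ)) (h : ℕ) (R0 θ0 β0 : ℝ) :
    Set (Fin d → ℂ) :=
  ⋃ n : ℕ, F^[n] ⁻¹' Bset d k h R0 θ0 β0

/-- `|α| = α₁ + ⋯ + α_d` for a multi-index `α`. -/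
def degree {d : ℕ} (α : Fin d → ℕ) : ℕ := ∑ i, α i

/-- `λ^α = λ₁^{α₁} ⋯ λ_d^{α_d}`. -/
def lampow {d : ℕ} (lam : Fin d → ℂ) (α : Fin d → ℕ) : ℂ := ∏ i, lam i ^ α i

/-- The minimal divisor function `ω_A(r)`. -/
def omegaA {d : ℕ} (lam : Fin d → ℂ) (A : Set (Fin d → ℕ)) (r : ℕ) : ℝ :=
  sInf ({x | ∃ α ∈ A, 2 ≤ degree α ∧ degree α ≤ r ∧
    ∃ i, x = ‖lampow lam α - lam i‖} ∪ {1})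

/-- `A ⊆ ℕ^d` is a Brjuno set for `(λ₁,…,λ_d)`:
`Σ_{m ≥ 1} 2^{-m} log(1/ω_A(2^m)) < ∞`. -/
def BrjunoSet {d : ℕ} (lam : Fin d → ℂ) (A : Set (Fin d → ℕ)) : Prop :=
  Summable fun m : ℕ => (2 : ℝ)⁻¹ ^ (m + 1) * Real.log (1 / omegaA lam A (2 ^ (m + 1)))

/-- The subset Brjuno condition: each `M_j = {α : α_j = 0}` is a Brjuno set. -/
def SubsetBrjuno {d : ℕ} (lam : Fin d → ℂ) : Prop :=
  ∀ j : Fin d, BrjunoSet lam {α | α j = 0}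

/-- A holomorphic automorphism of `ℂ^d`. -/
def IsAutomorphism {d : ℕ} (F : (Fin d → ℂ) → (Fin d → ℂ)) : Prop :=
  Differentiable ℂ F ∧ ∃ Finv : (Fin d → ℂ) → (Fin d → ℂ),
    Differentiable ℂ Finv ∧ Function.LeftInverse Finv F ∧ Function.RightInverse Finv F

/-- `U` is biholomorphic to `V` (as domains in `ℂ^d`). -/
def BiholoTo {d : ℕ} (U V : Set (Fin d → ℂ)) : Prop :=
  ∃ φ ψ : (Fin d → ℂ) → (Fin d → ℂ),
    DifferentiableOn ℂ φ U ∧ DifferentiableOn ℂ ψ V ∧ MapsTo φ U V ∧ MapsTo ψ V U ∧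
    (∀ z ∈ U, ψ (φ z) = z) ∧ (∀ w ∈ V, φ (ψ w) = w)

/-- The model domain `ℂ^{d-m} × (ℂ*)^m ⊆ ℂ^d`: the last `m` coordinates are nonzero. -/
def CCStarTarget (d m : ℕ) : Set (Fin d → ℂ) := {w | ∀ j : Fin d, d - m ≤ (j : ℕ) → w j ≠ 0}

/-- The Fatou set of `F`: points with a neighborhood on which every subsequence of the
iterates admits a further subsequence converging locally uniformly. -/
def FatouSet {d : ℕ} (F : (Fin d → ℂ) → (Fin d → ℂ)) : Set (Fin d → ℂ) :=
  {z | ∃ U ∈ 𝓝 z, ∀ φ : ℕ → ℕ, StrictMono φ →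
    ∃ ψ : ℕ → ℕ, StrictMono ψ ∧ ∃ g : (Fin d → ℂ) → (Fin d → ℂ),
      TendstoLocallyUniformlyOn (fun m z => F^[φ (ψ m)] z) g atTop U}

/-- `S` is a Fatou component of `F`: a connected component of the Fatou set. -/
def IsFatouComponent {d : ℕ} (F : (Fin d → ℂ) → (Fin d → ℂ)) (S : Set (Fin d → ℂ)) : Prop :=
  ∃ z ∈ FatouSet F, S = connectedComponentIn (FatouSet F) z

/-- `G` admits `N` disjoint `p`-periodic cycles of non-recurrent attracting Fatou
components, each biholomorphic to `T`, all attracted to the origin. -/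
def FatouCycles {d : ℕ} (G : (Fin d → ℂ) → (Fin d → ℂ)) (N p : ℕ) (T : Set (Fin d → ℂ)) :
    Prop :=
  G 0 = 0 ∧ ∃ V : Fin N → Set (Fin d → ℂ),
    (∀ (i : Fin N) (q : ℕ), q < p → IsFatouComponent G (G^[q] '' V i)) ∧
    (∀ i : Fin N, G^[p] '' V i = V i) ∧
    (∀ (i : Fin N) (q : ℕ), 0 < q → q < p → G^[q] '' V i ≠ V i) ∧
    (∀ (i i' : Fin N) (q q' : ℕ), q < p → q' < p → (i ≠ i' ∨ q ≠ q') →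
      Disjoint (G^[q] '' V i) (G^[q'] '' V i')) ∧
    (∀ (i : Fin N) (q : ℕ), q < p → BiholoTo (G^[q] '' V i) T) ∧
    (∀ (i : Fin N) (q : ℕ), q < p → (0 : Fin d → ℂ) ∈ frontier (G^[q] '' V i)) ∧
    (∀ (i : Fin N) (q : ℕ), q < p →
      TendstoLocallyUniformlyOn (fun n z => G^[n] z) (fun _ => 0) atTop (G^[q] '' V i))

/-- The sector at infinity `H(R,θ) = {U : Re U > R, |arg U| < kθ}`. -/
def Hsector (k : ℕ) (R θ : ℝ) : Set ℂ := {U | R < U.re ∧ |Complex.arg U| < (k : ℝ) * θ}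

/-- The tube `T(R,θ,β)` in the coordinates `(U, z²,…,z^d)`. -/
def Tset (d k : ℕ) [NeZero d] (R θ β : ℝ) : Set (Fin d → ℂ) :=
  {w | w 0 ∈ Hsector k R θ ∧
    ‖w 0‖ ^ ((β - 1) / (k : ℝ)) <
      ‖∏ j ∈ Finset.univ.erase (0 : Fin d), w j‖ ∧
    ∀ j : Fin d, j ≠ 0 → ‖w j‖ < ‖w 0‖ ^ (-β / (k : ℝ))}

/-- The Euclidean (ℓ²) norm on `ℂ^d`. -/
def l2norm {d : ℕ} (w : Fin d → ℂ) : ℝ := Real.sqrt (∑ j, ‖w j‖ ^ 2)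

/-- The minimal divisor function `ω_j(r)` omitting the `j`-th variable and the `j`-th
eigenvalue. -/
def omegaJ {d : ℕ} (lam : Fin d → ℂ) (j : Fin d) (r : ℕ) : ℝ :=
  sInf ({x | ∃ α : Fin d → ℕ, 2 ≤ degree α ∧ degree α ≤ r ∧ α j = 0 ∧
    ∃ i : Fin d, i ≠ j ∧ x = ‖lampow lam α - lam i‖} ∪ {1})


/-! One-resonance applied to `m = (1,…,1) + e_j` gives `λ^{(1,…,1)} = 1`; it also makes every
divisor `λ^α - λ_i` with `|α| ≥ 2` and some `α_j = 0` nonzero, so the minimal divisor functions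
compared below are positive. Convergence of `Σ 2^{-m} log(1/ω(2^m))` survives multiplying
`ω(2^m)` by a constant and evaluating it at `2^{m+s}` instead, and the sum for a finite product
of `ω`'s is the sum of theirs.

* `ω_{M_j} ≤ ω_j`; conversely the divisor `λ^α - λ_j` (`α_j = 0`) omitted by `ω_j` equals
  `(λ_j/λ_k)(λ^{α'} - λ_k)` for `α' = α + (1,…,1) - e_j + e_k` with `α_k ≠ 0`, where `α'_j = 0`
  and `|α'| = |α| + d`; hence `ω_j(r + d) ≤ C ω_{M_j}(r)`.
* For `β ∈ A_q`, `λ^β = λ^{β - (q,…,q)}` with `β - (q,…,q)` in some `M_j`, so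
  `∏_j ω_{M_j} ≤ ω_{A_q}`; conversely `A_0` contains every `α ∈ M_j` with `|α| ≥ 2`. -/

lemma Finite.exists_forall_le_mul_of_pos {ι : Type*} [Finite ι] (f : ι → ℝ)
    (hf : ∀ i, 0 < f i) : ∃ C, 1 ≤ C ∧ ∀ a b, f a ≤ C * f b := by
  obtain ⟨M, hM⟩ := Finite.exists_le fun p : ι × ι => f p.1 / f p.2
  refine ⟨max M 1, le_max_right _ _, fun a b => ?_⟩
  have hab := (div_le_iff₀ (hf b)).1 (hM (a, b))
  exact hab.trans (mul_le_mul_of_nonneg_right (le_max_left _ _) (hf b).le)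

section MultiIndex

variable {d : ℕ}

lemma degree_add (α β : Fin d → ℕ) : degree (α + β) = degree α + degree β :=
  Finset.sum_add_distrib

lemma degree_single (i : Fin d) (k : ℕ) : degree (Pi.single i k) = k := by
  simp [degree]

lemma degree_const (q : ℕ) : degree (fun _ : Fin d => q) = q * d := by
  simp [degree, mul_comm]

lemma degree_tsub_const {β : Fin d → ℕ} {q : ℕ} (hq : ∀ l, q ≤ β l) :
    degree (β - fun _ => q) + q * d = degree β := by
  rw [← degree_const, ← degree_add, tsub_add_cancel_of_le (show (fun _ => q) ≤ β from hq)]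

lemma exists_ne_zero_of_two_le_degree {α : Fin d → ℕ} (h : 2 ≤ degree α) : ∃ i, α i ≠ 0 := by
  by_contra! h0
  simp [degree, h0] at h

lemma finite_setOf_degree_le (r : ℕ) : {α : Fin d → ℕ | degree α ≤ r}.Finite :=
  (Set.finite_Iic fun _ => r).subset fun α hα i =>
    (Finset.single_le_sum (fun l _ => Nat.zero_le (α l)) (Finset.mem_univ i)).trans hα

variable (lam : Fin d → ℂ)

lemma lampow_add (α β : Fin d → ℕ) : lampow lam (α + β) = lampow lam α * lampow lam β := by
  simp [lampow, pow_add, Finset.prod_mul_distrib]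

lemma lampow_single (i : Fin d) (k : ℕ) : lampow lam (Pi.single i k) = lam i ^ k := by
  simp [lampow, Pi.single_apply, pow_ite]

lemma lampow_const (q : ℕ) : lampow lam (fun _ => q) = (∏ i, lam i) ^ q :=
  Finset.prod_pow _ _ _

end MultiIndex

lemma sInf_union_one_pos {S : Set ℝ} (hS : S.Finite) (h : ∀ x ∈ S, 0 < x) :
    0 < sInf (S ∪ {1}) := by
  obtain hx | hx := (Set.Nonempty.csInf_mem ⟨1, Or.inr rfl⟩ (hS.union (Set.finite_singleton 1)) :
    sInf (S ∪ {1}) ∈ S ∪ {1})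
  · exact h _ hx
  · rw [Set.mem_singleton_iff.1 hx]
    exact one_pos

section MinimalDivisors

variable {d : ℕ} (lam : Fin d → ℂ)

lemma omegaA_le_one (A : Set (Fin d → ℕ)) (r : ℕ) : omegaA lam A r ≤ 1 :=
  csInf_le ⟨0, by rintro _ (⟨α, -, -, -, i, rfl⟩ | rfl) <;> positivity⟩ (Or.inr rfl)

lemma omegaA_le {A : Set (Fin d → ℕ)} {r : ℕ} {α : Fin d → ℕ} (hα : α ∈ A) (h2 : 2 ≤ degree α)
    (hr : degree α ≤ r) (i : Fin d) : omegaA lam A r ≤ ‖lampow lam α - lam i‖ :=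
  csInf_le ⟨0, by rintro _ (⟨α, -, -, -, i, rfl⟩ | rfl) <;> positivity⟩
    (Or.inl ⟨α, hα, h2, hr, i, rfl⟩)

lemma le_omegaA {A : Set (Fin d → ℕ)} {r : ℕ} {c : ℝ} (hc : c ≤ 1)
    (h : ∀ α ∈ A, 2 ≤ degree α → degree α ≤ r → ∀ i, c ≤ ‖lampow lam α - lam i‖) :
    c ≤ omegaA lam A r :=
  le_csInf ⟨1, Or.inr rfl⟩ <| by
    rintro _ (⟨α, hα, h2, hr, i, rfl⟩ | rfl)
    exacts [h α hα h2 hr i, hc]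

lemma omegaA_anti {A B : Set (Fin d → ℕ)} (h : ∀ α ∈ A, 2 ≤ degree α → α ∈ B) (r : ℕ) :
    omegaA lam B r ≤ omegaA lam A r :=
  le_omegaA lam (omegaA_le_one lam B r) fun α hα h2 hr i => omegaA_le lam (h α hα h2) h2 hr i

lemma omegaA_pos {A : Set (Fin d → ℕ)} (h : ∀ α ∈ A, 2 ≤ degree α → ∀ i, lampow lam α ≠ lam i)
    (r : ℕ) : 0 < omegaA lam A r := by
  refine sInf_union_one_pos ((((finite_setOf_degree_le r).prod Set.finite_univ).image
    fun p => ‖lampow lam p.1 - lam p.2‖).subset ?_) ?_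
  · rintro _ ⟨α, -, -, hr, i, rfl⟩
    exact ⟨(α, i), ⟨hr, trivial⟩, rfl⟩
  · rintro _ ⟨α, hα, h2, -, i, rfl⟩
    exact norm_pos_iff.2 (sub_ne_zero.2 (h α hα h2 i))

lemma omegaJ_le_one (j : Fin d) (r : ℕ) : omegaJ lam j r ≤ 1 :=
  csInf_le ⟨0, by rintro _ (⟨α, -, -, -, i, -, rfl⟩ | rfl) <;> positivity⟩ (Or.inr rfl)

lemma omegaJ_le {j i : Fin d} {r : ℕ} {α : Fin d → ℕ} (h2 : 2 ≤ degree α) (hr : degree α ≤ r)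
    (hj : α j = 0) (hi : i ≠ j) : omegaJ lam j r ≤ ‖lampow lam α - lam i‖ :=
  csInf_le ⟨0, by rintro _ (⟨α, -, -, -, i, -, rfl⟩ | rfl) <;> positivity⟩
    (Or.inl ⟨α, h2, hr, hj, i, hi, rfl⟩)

lemma le_omegaJ {j : Fin d} {r : ℕ} {c : ℝ} (hc : c ≤ 1)
    (h : ∀ α, 2 ≤ degree α → degree α ≤ r → α j = 0 → ∀ i, i ≠ j →
      c ≤ ‖lampow lam α - lam i‖) :
    c ≤ omegaJ lam j r :=
  le_csInf ⟨1, Or.inr rfl⟩ <| by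
    rintro _ (⟨α, h2, hr, hj, i, hi, rfl⟩ | rfl)
    exacts [h α h2 hr hj i hi, hc]

lemma omegaA_le_omegaJ (j : Fin d) (r : ℕ) : omegaA lam {α | α j = 0} r ≤ omegaJ lam j r :=
  le_omegaJ lam (omegaA_le_one lam _ r) fun _ h2 hr hj i _ => omegaA_le lam hj h2 hr i

end MinimalDivisors

section BrjunoCondition

def BrjunoCondition (ω : ℕ → ℝ) : Prop :=
  Summable fun m : ℕ => (2 : ℝ)⁻¹ ^ m * Real.log (1 / ω (2 ^ m))

lemma brjunoCondition_iff_summable_succ {ω : ℕ → ℝ} :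
    (Summable fun m : ℕ => (2 : ℝ)⁻¹ ^ (m + 1) * Real.log (1 / ω (2 ^ (m + 1)))) ↔
      BrjunoCondition ω :=
  summable_nat_add_iff (f := fun m => (2 : ℝ)⁻¹ ^ m * Real.log (1 / ω (2 ^ m))) 1

lemma brjunoSet_iff {d : ℕ} (lam : Fin d → ℂ) (A : Set (Fin d → ℕ)) :
    BrjunoSet lam A ↔ BrjunoCondition (omegaA lam A) :=
  brjunoCondition_iff_summable_succ

lemma BrjunoCondition.of_le_mul {ω ω' : ℕ → ℝ} {C : ℝ} (s : ℕ) (hω' : ∀ r, 0 < ω' r)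
    (hω : ∀ r, ω r ≤ 1) (hC : 0 < C) (hle : ∀ m, ω' (2 ^ (m + s)) ≤ C * ω (2 ^ m))
    (h : BrjunoCondition ω') : BrjunoCondition ω := by
  have hpos (m : ℕ) : 0 < ω (2 ^ m) := pos_of_mul_pos_right ((hω' _).trans_le (hle m)) hC.le
  have hlog (m : ℕ) :
      Real.log (1 / ω (2 ^ m)) ≤ Real.log C + Real.log (1 / ω' (2 ^ (m + s))) := by
    have hω'm := hω' (2 ^ (m + s))
    rw [← Real.log_mul hC.ne' (by positivity)]
    refine Real.log_le_log (one_div_pos.2 (hpos m)) ?_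
    rw [mul_one_div, div_le_div_iff₀ (hpos m) hω'm]
    linarith [hle m]
  refine Summable.of_nonneg_of_le
    (fun m => mul_nonneg (by positivity) (Real.log_nonneg (one_le_one_div (hpos m) (hω _))))
    (fun m => ?_)
    (((summable_geometric_of_lt_one (by norm_num) (by norm_num : (2 : ℝ)⁻¹ < 1)).mul_left
      (Real.log C)).add (((summable_nat_add_iff s).2 h).mul_left (2 ^ s)))
  calc (2 : ℝ)⁻¹ ^ m * Real.log (1 / ω (2 ^ m))
      ≤ (2 : ℝ)⁻¹ ^ m * (Real.log C + Real.log (1 / ω' (2 ^ (m + s)))) := by gcongr; exact hlog m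
    _ = Real.log C * (2 : ℝ)⁻¹ ^ m +
        2 ^ s * ((2 : ℝ)⁻¹ ^ (m + s) * Real.log (1 / ω' (2 ^ (m + s)))) := by
      have h2s : (2 : ℝ) ^ s * (2 : ℝ)⁻¹ ^ (m + s) = (2 : ℝ)⁻¹ ^ m := by
        rw [pow_add, mul_left_comm, ← mul_pow, mul_inv_cancel₀ two_ne_zero, one_pow, mul_one]
      rw [← mul_assoc, h2s]
      ring

lemma BrjunoCondition.mono {ω ω' : ℕ → ℝ} (hω' : ∀ r, 0 < ω' r) (hω : ∀ r, ω r ≤ 1)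
    (hle : ∀ r, ω' r ≤ ω r) (h : BrjunoCondition ω') : BrjunoCondition ω :=
  h.of_le_mul 0 hω' hω one_pos fun m => by simpa using hle (2 ^ m)

lemma BrjunoCondition.prod {ι : Type*} (s : Finset ι) {ω : ι → ℕ → ℝ}
    (hpos : ∀ i ∈ s, ∀ r, 0 < ω i r) (h : ∀ i ∈ s, BrjunoCondition (ω i)) :
    BrjunoCondition fun r => ∏ i ∈ s, ω i r := by
  refine (summable_sum h).congr fun m => ?_
  simp only [one_div, Real.log_inv, Real.log_prod fun i hi => (hpos i hi _).ne',
    Finset.sum_neg_distrib, mul_neg, Finset.mul_sum]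

end BrjunoCondition

namespace OneResonant

variable {d : ℕ} {lam : Fin d → ℂ} (hres : OneResonant lam)
include hres

lemma lampow_ne_of_eq_zero {α : Fin d → ℕ} {j : Fin d} (h2 : 2 ≤ degree α) (hj : α j = 0)
    (i : Fin d) : lampow lam α ≠ lam i := by
  intro h
  obtain ⟨q, hq⟩ := (hres α i).1 h
  have hq0 : q = 0 := by
    have := hq j
    omega
  have hα : α = Pi.single i 1 := funext fun l => by simp [hq, hq0, Pi.single_apply]
  rw [hα, degree_single] at h2
  omega

lemma omegaA_setOf_eq_zero_pos (j : Fin d) (r : ℕ) : 0 < omegaA lam {α | α j = 0} r :=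
  omegaA_pos lam (fun _ hα h2 i => hres.lampow_ne_of_eq_zero h2 hα i) r

variable (hlam : ∀ i, lam i ≠ 0)
include hlam

lemma prod_eq_one (j : Fin d) : ∏ i, lam i = 1 := by
  have h := (hres ((fun _ => 1) + Pi.single j 1) j).2 ⟨1, fun l => by simp [Pi.single_apply]⟩
  change lampow lam _ = _ at h
  rw [lampow_add, lampow_const, lampow_single, pow_one, pow_one] at h
  exact mul_right_cancel₀ (hlam j) (h.trans (one_mul _).symm)

lemma lampow_tsub_const {β : Fin d → ℕ} {q : ℕ} (hq : ∀ l, q ≤ β l) (j : Fin d) :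
    lampow lam (β - fun _ => q) = lampow lam β := by
  conv_rhs => rw [← tsub_add_cancel_of_le (show (fun _ => q) ≤ β from hq)]
  rw [lampow_add, lampow_const, hres.prod_eq_one hlam j, one_pow, mul_one]

lemma exists_lampow_sub_eq {α : Fin d → ℕ} {j k : Fin d} (hj : α j = 0) (hk : k ≠ j) :
    ∃ α', α' j = 0 ∧ degree α' = degree α + d ∧
      lampow lam α' - lam k = lam k / lam j * (lampow lam α - lam j) := by
  set β := α + (fun _ => 1) + Pi.single k 1
  have hle : Pi.single j 1 ≤ β := fun l => by
    simp only [β, Pi.add_apply, Pi.single_apply]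
    split_ifs <;> omega
  have hβ := tsub_add_cancel_of_le hle
  refine ⟨β - Pi.single j 1, by simp [β, hj, hk], ?_, ?_⟩
  · have h := congrArg degree hβ
    simp only [β, degree_add, degree_single, degree_const] at h ⊢
    omega
  · have h := congrArg (lampow lam) hβ
    simp only [β, lampow_add, lampow_const, lampow_single, hres.prod_eq_one hlam j,
      pow_one, mul_one] at h ⊢
    field_simp [hlam j]
    linear_combination h

end OneResonant

section Comparisons

variable {d : ℕ} {lam : Fin d → ℂ} (hres : OneResonant lam) (hlam : ∀ i, lam i ≠ 0)
include hres hlam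

lemma omegaJ_le_mul_omegaA {C : ℝ} (hC1 : 1 ≤ C) (hC : ∀ a b, ‖lam a‖ ≤ C * ‖lam b‖)
    (j : Fin d) {r r' : ℕ} (hr : r + d ≤ r') :
    omegaJ lam j r' ≤ C * omegaA lam {α | α j = 0} r := by
  have hC0 : 0 < C := one_pos.trans_le hC1
  rw [← div_le_iff₀' hC0]
  refine le_omegaA lam ((div_le_one hC0).2 ((omegaJ_le_one lam j r').trans hC1))
    fun α hj h2 hrα i => (div_le_iff₀' hC0).2 ?_
  by_cases hij : i = j
  · subst hij
    obtain ⟨k, hk⟩ := exists_ne_zero_of_two_le_degree h2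
    have hki : k ≠ i := fun h => hk (h ▸ hj)
    obtain ⟨α', hα'j, hdeg, heq⟩ := hres.exists_lampow_sub_eq hlam hj hki
    calc omegaJ lam i r' ≤ ‖lampow lam α' - lam k‖ := omegaJ_le lam (by omega) (by omega) hα'j hki
      _ = ‖lam k‖ / ‖lam i‖ * ‖lampow lam α - lam i‖ := by rw [heq, norm_mul, norm_div]
      _ ≤ C * ‖lampow lam α - lam i‖ := by
        gcongr
        exact (div_le_iff₀ (norm_pos_iff.2 (hlam i))).2 (hC k i)
  · calc omegaJ lam j r' ≤ ‖lampow lam α - lam i‖ := omegaJ_le lam h2 (by omega) hj hij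
      _ ≤ C * ‖lampow lam α - lam i‖ := le_mul_of_one_le_left (norm_nonneg _) hC1

lemma prod_omegaA_le_omegaA (q r : ℕ) :
    ∏ j, omegaA lam {α | α j = 0} r ≤
      omegaA lam {β | q * d + 1 < degree β ∧ (∀ i, q ≤ β i) ∧ ∃ i, β i = q} r := by
  have hpos (j : Fin d) := hres.omegaA_setOf_eq_zero_pos j r
  refine le_omegaA lam (Finset.prod_le_one (fun j _ => (hpos j).le)
    fun j _ => omegaA_le_one lam _ r) ?_
  rintro β ⟨hdeg, hq, l, hl⟩ h2 hr i
  have hshift := degree_tsub_const hq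
  calc ∏ j, omegaA lam {α | α j = 0} r
      = omegaA lam {α | α l = 0} r * ∏ j ∈ Finset.univ.erase l, omegaA lam {α | α j = 0} r :=
        (Finset.mul_prod_erase _ _ (Finset.mem_univ l)).symm
    _ ≤ omegaA lam {α | α l = 0} r := mul_le_of_le_one_right (hpos l).le
        (Finset.prod_le_one (fun j _ => (hpos j).le) fun j _ => omegaA_le_one lam _ r)
    _ ≤ ‖lampow lam (β - fun _ => q) - lam i‖ :=
        omegaA_le lam (by simp [hl]) (by omega) (by omega) i
    _ = ‖lampow lam β - lam i‖ := by rw [hres.lampow_tsub_const hlam hq l]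

end Comparisons

lemma add_le_two_pow_add (m d : ℕ) : 2 ^ m + d ≤ 2 ^ (m + d) := by
  have h1 : d + 1 ≤ 2 ^ d := Nat.lt_two_pow_self
  have h2 : 1 ≤ 2 ^ m := Nat.one_le_two_pow
  rw [pow_add]
  nlinarith

theorem stmt5_general (d : ℕ) (lam : Fin d → ℂ) (hlam : ∀ i, lam i ≠ 0)
    (hres : OneResonant lam) :
    ((∀ j : Fin d, Summable fun m : ℕ =>
        (2 : ℝ)⁻¹ ^ (m + 1) * Real.log (1 / omegaJ lam j (2 ^ (m + 1)))) ↔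
      (∀ j : Fin d, BrjunoSet lam {α | α j = 0})) ∧
    ((∀ j : Fin d, BrjunoSet lam {α | α j = 0}) ↔
      (∀ q : ℕ, BrjunoSet lam
        {β : Fin d → ℕ | q * d + 1 < degree β ∧ (∀ i, q ≤ β i) ∧ ∃ i, β i = q})) := by
  obtain ⟨C, hC1, hC⟩ := Finite.exists_forall_le_mul_of_pos (fun i => ‖lam i‖)
    fun i => norm_pos_iff.2 (hlam i)
  have hM := hres.omegaA_setOf_eq_zero_pos
  have hA₀ (r : ℕ) :
      0 < omegaA lam {β | 0 * d + 1 < degree β ∧ (∀ i, 0 ≤ β i) ∧ ∃ i, β i = 0} r :=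
    omegaA_pos lam (by rintro α ⟨-, -, j, hj⟩ h2 i; exact hres.lampow_ne_of_eq_zero h2 hj i) r
  simp only [brjunoSet_iff, brjunoCondition_iff_summable_succ]
  refine ⟨forall_congr' fun j => ⟨fun h => ?_, fun h => ?_⟩, fun h q => ?_, fun h j => ?_⟩
  · exact h.of_le_mul d (fun r => (hM j r).trans_le (omegaA_le_omegaJ lam j r))
      (omegaA_le_one lam _) (one_pos.trans_le hC1)
      fun m => omegaJ_le_mul_omegaA hres hlam hC1 hC j (add_le_two_pow_add m d)
  · exact h.mono (hM j) (omegaJ_le_one lam j) (omegaA_le_omegaJ lam j)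
  · exact (BrjunoCondition.prod Finset.univ (fun j _ => hM j) fun j _ => h j).mono
      (fun r => Finset.prod_pos fun j _ => hM j r) (omegaA_le_one lam _)
      (prod_omegaA_le_omegaA hres hlam q)
  · exact (h 0).mono hA₀ (omegaA_le_one lam _) <| omegaA_anti lam
      fun _ hα h2 => show _ ∧ _ from ⟨by omega, fun _ => Nat.zero_le _, j, hα⟩

/-- For one-resonant `(λ₁,…,λ_d)` of index `(1,…,1)`, the Brjuno condition
on subsets, the partial Brjuno condition, and the Brjuno-set condition on the sets `A_q`
are all equivalent. -/
theorem stmt5 (d : ℕ) (hd : 1 ≤ d) (lam : Fin d → ℂ) (hlam : ∀ i, lam i ≠ 0)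
    (hres : OneResonant lam) :
    ((∀ j : Fin d, Summable fun m : ℕ =>
        (2 : ℝ)⁻¹ ^ (m + 1) * Real.log (1 / omegaJ lam j (2 ^ (m + 1)))) ↔
      (∀ j : Fin d, BrjunoSet lam {α | α j = 0})) ∧
    ((∀ j : Fin d, BrjunoSet lam {α | α j = 0}) ↔
      (∀ q : ℕ, BrjunoSet lam
        {β : Fin d → ℕ | q * d + 1 < degree β ∧ (∀ i, q ≤ β i) ∧ ∃ i, β i = q})) :=
  stmt5_general d lam hlam hres
end
end

section
/- Let F, B_h, ψ, σ_2,…,σ_d and R_1,θ_1,β_1, R_2,θ_2,β_2 be as in the hypotheses (with (ψ,σ_2,…,σ_d) injective on B_h(R_1,θ_1,β_1) and T(R_2,θ_2,β_2)⊆(ψ,σ_2,…,σ_d)(B_h)). For j=2,…,d define τ_j:=ψ^{1/(kd)}·σ_j on B_h (principal branch root, well-defined since Re ψ>0). Then each τ_j maps B_h to ℂ∖{0} and satisfies τ_j(F(z))=λ_j·τ_j(z) for all z∈B_h. Moreover the map (ψ,τ_2,…,τ_d) is injective on B_h(R_1,θ_1,β_1), and its image contains the set {(U,w^2,…,w^d)∈ℂ×ℂ^{d−1}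 : U∈H(R_2,θ_2), |U|^{(β_2−1/d)/k}<|w^2⋯w^d|, and |w^j|<|U|^{(1/d−β_2)/k} for j=2,…,d}, where H(R,θ):={U∈ℂ : Re U>R, |arg U|<kθ}. -/
/-!
The coordinate `ψ` conjugates `F` to the translation `U ↦ U + 1`, under which the factor
`(ψ/(ψ+1))^{1/(kd)}` in the functional equation of `σ_j` is exactly `ψ^{1/(kd)} / (ψ+1)^{1/(kd)}`
(both have positive real part, so principal powers are multiplicative). Hence `τ_j = ψ^{1/(kd)} σ_j`
satisfies `τ_j ∘ F = λ_j τ_j`. Since `ψ^{1/(kd)}` is a nonvanishing function of the first coordinate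
`ψ`, multiplying the other coordinates by it preserves injectivity, and dividing them by it maps
the new tube into `T(R₂,θ₂,β₂)`, since `|ψ^{1/(kd)}| = |U|^{1/(kd)}` shifts each exponent by
`1/(kd)`.
-/

open Complex Metric Set Filter Topology Asymptotics

noncomputable section

namespace Complex

theorem log_div_of_re_pos {a b : ℂ} (ha : 0 < a.re) (hb : 0 < b.re) :
    log (a / b) = log a - log b := by
  have ha0 : a ≠ 0 := fun h => by simp [h] at ha
  have hb0 : b ≠ 0 := fun h => by simp [h] at hb
  obtain ⟨ha₁, ha₂⟩ := abs_lt.1 (abs_arg_lt_pi_div_two_iff.2 (Or.inl ha))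
  obtain ⟨hb₁, hb₂⟩ := abs_lt.1 (abs_arg_lt_pi_div_two_iff.2 (Or.inl hb))
  have hbπ : b.arg ≠ Real.pi := by linarith [Real.pi_pos]
  have hsum : a.arg + b⁻¹.arg ∈ Ioc (-Real.pi) Real.pi := by
    rw [arg_inv, if_neg hbπ]
    constructor <;> linarith
  rw [div_eq_mul_inv, (log_mul_eq_add_log_iff ha0 (inv_ne_zero hb0)).2 hsum, log_inv b hbπ,
    sub_eq_add_neg]

theorem div_cpow_mul_cpow_of_re_pos {a b : ℂ} (ha : 0 < a.re) (hb : 0 < b.re) (c : ℂ) :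
    (a / b) ^ c * b ^ c = a ^ c := by
  have ha0 : a ≠ 0 := fun h => by simp [h] at ha
  have hb0 : b ≠ 0 := fun h => by simp [h] at hb
  rw [cpow_def_of_ne_zero (div_ne_zero ha0 hb0), cpow_def_of_ne_zero hb0,
    cpow_def_of_ne_zero ha0, ← exp_add, log_div_of_re_pos ha hb]
  ring_nf

end Complex

section Basins

variable {d k h : ℕ} {R R' θ θ' β β' : ℝ} {u : ℂ}

theorem one_div_two_mul_ofReal (R : ℝ) :
    1 / (2 * (R : ℂ)) = ((1 / (2 * R) : ℝ) : ℂ) := by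
  push_cast; ring

theorem one_div_two_mul_pos_of_mem_Ssector (hu : u ∈ Ssector k h R θ) : 0 < 1 / (2 * R) :=
  (norm_nonneg _).trans_lt hu.1

theorem ne_zero_of_mem_Ssector (hk : k ≠ 0) (hu : u ∈ Ssector k h R θ) : u ≠ 0 := by
  rintro rfl
  have hnorm := hu.1
  rw [zero_pow hk, zero_sub, norm_neg, one_div_two_mul_ofReal, norm_real, Real.norm_eq_abs] at hnorm
  exact (le_abs_self _).not_gt hnorm

theorem norm_pow_lt_of_mem_Ssector (hu : u ∈ Ssector k h R θ) : ‖u‖ ^ k < 1 / R := by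
  have hR := one_div_two_mul_pos_of_mem_Ssector hu
  have hc : ‖1 / (2 * (R : ℂ))‖ = 1 / (2 * R) := by
    rw [one_div_two_mul_ofReal, norm_real, Real.norm_eq_abs, abs_of_pos hR]
  calc ‖u‖ ^ k = ‖(u ^ k - 1 / (2 * (R : ℂ))) + 1 / (2 * (R : ℂ))‖ := by
        rw [sub_add_cancel, norm_pow]
    _ ≤ ‖u ^ k - 1 / (2 * (R : ℂ))‖ + ‖1 / (2 * (R : ℂ))‖ := norm_add_le _ _
    _ < 1 / (2 * R) + 1 / (2 * R) := by rw [hc]; gcongr; exact hu.1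
    _ = 1 / R := by ring

/-- The discs `|u^k − 1/(2R)| < 1/(2R)` have diameter `[0, 1/R]`, so they shrink as `R` grows. -/
theorem Ssector_subset_Ssector (hR : 0 < R) (hRR' : R ≤ R') (hθ : θ' ≤ θ) :
    Ssector k h R' θ' ⊆ Ssector k h R θ := by
  intro u hu
  have hshift : ‖1 / (2 * (R' : ℂ)) - 1 / (2 * (R : ℂ))‖ = 1 / (2 * R) - 1 / (2 * R') := by
    have hle : 1 / (2 * R') ≤ 1 / (2 * R) := by gcongr
    rw [one_div_two_mul_ofReal, one_div_two_mul_ofReal, ← ofReal_sub, norm_real,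
      Real.norm_eq_abs, abs_of_nonpos (by linarith), neg_sub]
  refine ⟨?_, hu.2.trans_le hθ⟩
  calc ‖u ^ k - 1 / (2 * (R : ℂ))‖
        = ‖(u ^ k - 1 / (2 * (R' : ℂ))) + (1 / (2 * (R' : ℂ)) - 1 / (2 * (R : ℂ)))‖ := by
          ring_nf
    _ ≤ ‖u ^ k - 1 / (2 * (R' : ℂ))‖ + ‖1 / (2 * (R' : ℂ)) - 1 / (2 * (R : ℂ))‖ :=
          norm_add_le _ _
    _ < 1 / (2 * R') + (1 / (2 * R) - 1 / (2 * R')) := by rw [hshift]; gcongr; exact hu.1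
    _ = 1 / (2 * R) := by ring

theorem Bset_subset_Bset (hk : k ≠ 0) (hR : 0 < R) (hRR' : R ≤ R') (hR' : 1 ≤ R')
    (hθ : θ' ≤ θ) (hβ : β ≤ β') : Bset d k h R' θ' β' ⊆ Bset d k h R θ β := by
  rintro z ⟨hW, hS⟩
  have hπ : 0 < ‖pprod z‖ := norm_pos_iff.2 (ne_zero_of_mem_Ssector hk hS)
  have hπ1 : ‖pprod z‖ ≤ 1 := by
    refine (pow_le_one_iff_of_nonneg hπ.le hk).1 ?_
    exact (norm_pow_lt_of_mem_Ssector hS).le.trans (div_le_one_of_le₀ hR' (by linarith))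
  exact ⟨fun j => (hW j).trans_le (Real.rpow_le_rpow_of_exponent_ge hπ hπ1 hβ),
    Ssector_subset_Ssector hR hRR' hθ hS⟩

end Basins

section Coordinates

variable {α ι 𝕜 : Type*} [DecidableEq ι]

def withHead (i₀ : ι) (f : α → 𝕜) (g : ι → α → 𝕜) : α → ι → 𝕜 :=
  fun z j => if j = i₀ then f z else g j z

variable {i₀ : ι} {f : α → 𝕜} {g : ι → α → 𝕜} {m : 𝕜 → 𝕜} {s : Set α}

theorem Set.InjOn.withHead_mul [MonoidWithZero 𝕜] [IsLeftCancelMulZero 𝕜]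
    (hinj : InjOn (withHead i₀ f g) s) (hm : ∀ z ∈ s, m (f z) ≠ 0) :
    InjOn (withHead i₀ f fun j z => m (f z) * g j z) s := by
  intro z hz z' hz' heq
  have hhead : f z = f z' := by simpa [withHead] using congrFun heq i₀
  refine hinj hz hz' (funext fun j => ?_)
  by_cases hj : j = i₀
  · simpa [withHead, hj] using hhead
  · have htail := congrFun heq j
    simp only [withHead, if_neg hj, hhead] at htail ⊢
    exact mul_left_cancel₀ (hm z' hz') htail

theorem mem_image_withHead_mul [CommGroupWithZero 𝕜] {w : ι → 𝕜}
    (hw : (fun j => if j = i₀ then w i₀ else w j / m (w i₀)) ∈ withHead i₀ f g '' s)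
    (hm : ∀ z ∈ s, m (f z) ≠ 0) :
    w ∈ withHead i₀ f (fun j z => m (f z) * g j z) '' s := by
  obtain ⟨z, hz, hzw⟩ := hw
  have hhead : f z = w i₀ := by simpa [withHead] using congrFun hzw i₀
  refine ⟨z, hz, funext fun j => ?_⟩
  by_cases hj : j = i₀
  · simpa [withHead, hj] using hhead
  · have htail : g j z = w j / m (w i₀) := by simpa [withHead, hj] using congrFun hzw j
    simp only [withHead, if_neg hj, htail, hhead]
    exact mul_div_cancel₀ _ (hhead ▸ hm z hz)

end Coordinates

section Tube

variable {d k : ℕ} [NeZero d] {R θ β : ℝ}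

/-- The tube `T(R,θ,β)` in the coordinates `(U, τ₂,…,τ_d)`, where `τ_j = U^{1/(kd)} σ_j`. -/
def TsetTau (d k : ℕ) [NeZero d] (R θ β : ℝ) : Set (Fin d → ℂ) :=
  {w | w 0 ∈ Hsector k R θ ∧
    ‖w 0‖ ^ ((β - 1 / (d : ℝ)) / (k : ℝ)) < ‖∏ j ∈ Finset.univ.erase (0 : Fin d), w j‖ ∧
    ∀ j : Fin d, j ≠ 0 → ‖w j‖ < ‖w 0‖ ^ ((1 / (d : ℝ) - β) / (k : ℝ))}

theorem norm_cpow_one_div_mul (w : ℂ) (k d : ℕ) :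
    ‖w ^ ((1 : ℂ) / ((k : ℂ) * (d : ℂ)))‖ = ‖w‖ ^ (1 / ((k : ℝ) * (d : ℝ))) := by
  rw [← norm_cpow_real]
  push_cast
  rfl

theorem rescale_mem_Tset (hk : k ≠ 0) (hR : 0 < R) {w : Fin d → ℂ} (hw : w ∈ TsetTau d k R θ β) :
    (fun j => if j = 0 then w 0 else w j / w 0 ^ ((1 : ℂ) / ((k : ℂ) * (d : ℂ)))) ∈
      Tset d k R θ β := by
  obtain ⟨hH, hprod, hcoord⟩ := hw
  have hA : 0 < ‖w 0‖ := norm_pos_iff.2 fun h0 => by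
    have := hH.1
    rw [h0, zero_re] at this
    linarith
  have hk' : (k : ℝ) ≠ 0 := Nat.cast_ne_zero.2 hk
  have hd' : (d : ℝ) ≠ 0 := Nat.cast_ne_zero.2 (NeZero.ne d)
  set e : ℝ := 1 / ((k : ℝ) * (d : ℝ)) with he
  refine ⟨by simpa using hH, ?_, fun j hj => ?_⟩ <;> dsimp only <;> rw [if_pos rfl]
  · have hcard : ((Finset.univ.erase (0 : Fin d)).card : ℝ) = (d : ℝ) - 1 := by
      rw [Finset.card_erase_of_mem (Finset.mem_univ _), Finset.card_univ, Fintype.card_fin,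
        Nat.cast_pred (Nat.pos_of_ne_zero (NeZero.ne d))]
    have hexp : (β - 1) / (k : ℝ) + e * ((d : ℝ) - 1) = (β - 1 / (d : ℝ)) / (k : ℝ) := by
      rw [he]; field_simp; ring
    rw [Finset.prod_congr rfl fun j hj => if_neg (Finset.mem_erase.1 hj).1,
      Finset.prod_div_distrib, Finset.prod_const, norm_div, norm_pow, norm_cpow_one_div_mul,
      ← Real.rpow_natCast, ← Real.rpow_mul hA.le, hcard, lt_div_iff₀ (by positivity),
      ← Real.rpow_add hA, hexp]
    simpa using hprod
  · have hexp : -β / (k : ℝ) + e = (1 / (d : ℝ) - β) / (k : ℝ) := by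
      rw [he]; field_simp; ring
    rw [if_neg hj, norm_div, norm_cpow_one_div_mul, div_lt_iff₀ (by positivity),
      ← Real.rpow_add hA, hexp]
    exact hcoord j hj

end Tube

theorem cpow_mul_apply_eq_mul_of_add_one {α : Type*} {F : α → α} {ψ σ : α → ℂ} {μ c : ℂ} {z : α}
    (hψre : 0 < (ψ z).re) (hψF : ψ (F z) = ψ z + 1)
    (hσF : σ (F z) = μ * σ z * (ψ z / (ψ z + 1)) ^ c) :
    ψ (F z) ^ c * σ (F z) = μ * (ψ z ^ c * σ z) := by
  have hre : 0 < (ψ z + 1).re := by rw [add_re, one_re]; linarith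
  rw [hψF, hσF]
  linear_combination (μ * σ z) * div_cpow_mul_cpow_of_re_pos hψre hre c

theorem stmt13_general (d k l : ℕ) [NeZero d] (hk : 1 ≤ k)
    (lam : Fin d → ℂ)
    (F : (Fin d → ℂ) → (Fin d → ℂ))
    (R0 θ0 β0 : ℝ) (hbasin : LocalBasinHyp d k l F R0 θ0 β0)
    (h : ℕ)
    (ψ : (Fin d → ℂ) → ℂ)
    (hψre : ∀ z ∈ Bset d k h R0 θ0 β0, 0 < (ψ z).re)
    (hψF : ∀ z ∈ Bset d k h R0 θ0 β0, ψ (F z) = ψ z + 1)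
    (σ : Fin d → (Fin d → ℂ) → ℂ)
    (hσne : ∀ j : Fin d, j ≠ 0 → ∀ z ∈ Bset d k h R0 θ0 β0, σ j z ≠ 0)
    (hσF : ∀ j : Fin d, j ≠ 0 → ∀ z ∈ Bset d k h R0 θ0 β0,
      σ j (F z) = lam j * σ j z * (ψ z / (ψ z + 1)) ^ ((1 : ℂ) / ((k : ℂ) * (d : ℂ))))
    (R1 θ1 β1 : ℝ) (hR1 : max R0 1 < R1) (hθ1 : θ1 ∈ Ioo 0 θ0)
    (hβ1 : β1 ∈ Ioo β0 (1 / (d : ℝ)))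
    (hinjφ : Set.InjOn (fun z => (fun j : Fin d => if j = 0 then ψ z else σ j z))
      (Bset d k h R1 θ1 β1))
    (R2 θ2 β2 : ℝ) (hR2 : 0 < R2)
    (hT : Tset d k R2 θ2 β2 ⊆
      (fun z => (fun j : Fin d => if j = 0 then ψ z else σ j z)) '' Bset d k h R0 θ0 β0) :
    (∀ j : Fin d, j ≠ 0 → ∀ z ∈ Bset d k h R0 θ0 β0,
      ψ z ^ ((1 : ℂ) / ((k : ℂ) * (d : ℂ))) * σ j z ≠ 0) ∧
    (∀ j : Fin d, j ≠ 0 → ∀ z ∈ Bset d k h R0 θ0 β0,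
      ψ (F z) ^ ((1 : ℂ) / ((k : ℂ) * (d : ℂ))) * σ j (F z) =
        lam j * (ψ z ^ ((1 : ℂ) / ((k : ℂ) * (d : ℂ))) * σ j z)) ∧
    Set.InjOn (fun z => (fun j : Fin d => if j = 0 then ψ z
        else ψ z ^ ((1 : ℂ) / ((k : ℂ) * (d : ℂ))) * σ j z))
      (Bset d k h R1 θ1 β1) ∧
    {w : Fin d → ℂ | w 0 ∈ Hsector k R2 θ2 ∧
        ‖w 0‖ ^ ((β2 - 1 / (d : ℝ)) / (k : ℝ)) <
          ‖∏ j ∈ Finset.univ.erase (0 : Fin d), w j‖ ∧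
        ∀ j : Fin d, j ≠ 0 →
          ‖w j‖ < ‖w 0‖ ^ ((1 / (d : ℝ) - β2) / (k : ℝ))} ⊆
      (fun z => (fun j : Fin d => if j = 0 then ψ z
        else ψ z ^ ((1 : ℂ) / ((k : ℂ) * (d : ℂ))) * σ j z)) '' Bset d k h R0 θ0 β0 := by
  set c : ℂ := (1 : ℂ) / ((k : ℂ) * (d : ℂ))
  have hψc : ∀ z ∈ Bset d k h R0 θ0 β0, ψ z ^ c ≠ 0 := fun z hz =>
    cpow_ne_zero_iff.2 (Or.inl fun h0 => (hψre z hz).ne' (by rw [h0, zero_re]))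
  have hsub : Bset d k h R1 θ1 β1 ⊆ Bset d k h R0 θ0 β0 :=
    Bset_subset_Bset (by omega) hbasin.1 ((le_max_left _ _).trans hR1.le)
      ((le_max_right _ _).trans hR1.le) hθ1.2.le hβ1.1.le
  refine ⟨fun j hj z hz => mul_ne_zero (hψc z hz) (hσne j hj z hz),
    fun j hj z hz => cpow_mul_apply_eq_mul_of_add_one (hψre z hz) (hψF z hz) (hσF j hj z hz),
    hinjφ.withHead_mul (i₀ := 0) (f := ψ) (g := σ) (m := (· ^ c)) fun z hz => hψc z (hsub hz),
    fun w hw => mem_image_withHead_mul (i₀ := 0) (f := ψ) (g := σ) (m := (· ^ c))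
      (hT (rescale_mem_Tset (by omega) hR2 hw)) hψc⟩

/-- The maps `τ_j = ψ^{1/(kd)}·σ_j` are nonvanishing on `B_h`, satisfy
`τ_j∘F = λ_j·τ_j`, the map `(ψ, τ₂,…,τ_d)` is injective on `B_h(R₁,θ₁,β₁)`, and its image
contains the stated tube. -/
theorem stmt13 (d k l : ℕ) [NeZero d] (hd : 2 ≤ d) (hk : 1 ≤ k) (hl : 2 * k * d + 1 < l)
    (lam : Fin d → ℂ) (hmod : ∀ j, ‖lam j‖ = 1) (hres : OneResonant lam)
    (F : (Fin d → ℂ) → (Fin d → ℂ)) (hF0 : F 0 = 0)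
    (hgerm : ∃ r : ℝ, 0 < r ∧ DifferentiableOn ℂ F (Metric.ball 0 r) ∧
      Set.InjOn F (Metric.ball 0 r))
    (hform : FormStar lam k l F)
    (R0 θ0 β0 : ℝ) (hbasin : LocalBasinHyp d k l F R0 θ0 β0)
    (h : ℕ) (hh : h < k)
    (ψ : (Fin d → ℂ) → ℂ)
    (hψdiff : DifferentiableOn ℂ ψ (Bset d k h R0 θ0 β0))
    (hψre : ∀ z ∈ Bset d k h R0 θ0 β0, 0 < (ψ z).re)
    (hψF : ∀ z ∈ Bset d k h R0 θ0 β0, ψ (F z) = ψ z + 1)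
    (c : ℂ) (Cψ : ℝ)
    (hψasym : ∀ z ∈ Bset d k h R0 θ0 β0,
      ‖ψ z - ((pprod z ^ k)⁻¹ + c * Complex.log ((pprod z ^ k)⁻¹))‖ ≤
        Cψ / ‖(pprod z ^ k)⁻¹‖)
    (σ : Fin d → (Fin d → ℂ) → ℂ)
    (hσdiff : ∀ j : Fin d, j ≠ 0 → DifferentiableOn ℂ (σ j) (Bset d k h R0 θ0 β0))
    (hσne : ∀ j : Fin d, j ≠ 0 → ∀ z ∈ Bset d k h R0 θ0 β0, σ j z ≠ 0)
    (hσF : ∀ j : Fin d, j ≠ 0 → ∀ z ∈ Bset d k h R0 θ0 β0,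
      σ j (F z) = lam j * σ j z * (ψ z / (ψ z + 1)) ^ ((1 : ℂ) / ((k : ℂ) * (d : ℂ))))
    (hσasym : ∀ j : Fin d, j ≠ 0 → ∀ a : ℝ, 1 - β0 < a → a < k → ∃ C : ℝ,
      ∀ z ∈ Bset d k h R0 θ0 β0, ‖σ j z - z j‖ ≤ C * ‖pprod z‖ ^ a)
    (R1 θ1 β1 : ℝ) (hR1 : max R0 1 < R1) (hθ1 : θ1 ∈ Ioo 0 θ0)
    (hβ1 : β1 ∈ Ioo β0 (1 / (d : ℝ)))
    (hinjφ : Set.InjOn (fun z => (fun j : Fin d => if j = 0 then ψ z else σ j z))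
      (Bset d k h R1 θ1 β1))
    (R2 θ2 β2 : ℝ) (hR2 : 0 < R2) (hθ2 : θ2 ∈ Ioo 0 (Real.pi / (2 * (k : ℝ))))
    (hβ2 : β2 ∈ Ioo 0 (1 / (d : ℝ)))
    (hT : Tset d k R2 θ2 β2 ⊆
      (fun z => (fun j : Fin d => if j = 0 then ψ z else σ j z)) '' Bset d k h R0 θ0 β0) :
    (∀ j : Fin d, j ≠ 0 → ∀ z ∈ Bset d k h R0 θ0 β0,
      ψ z ^ ((1 : ℂ) / ((k : ℂ) * (d : ℂ))) * σ j z ≠ 0) ∧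
    (∀ j : Fin d, j ≠ 0 → ∀ z ∈ Bset d k h R0 θ0 β0,
      ψ (F z) ^ ((1 : ℂ) / ((k : ℂ) * (d : ℂ))) * σ j (F z) =
        lam j * (ψ z ^ ((1 : ℂ) / ((k : ℂ) * (d : ℂ))) * σ j z)) ∧
    Set.InjOn (fun z => (fun j : Fin d => if j = 0 then ψ z
        else ψ z ^ ((1 : ℂ) / ((k : ℂ) * (d : ℂ))) * σ j z))
      (Bset d k h R1 θ1 β1) ∧
    {w : Fin d → ℂ | w 0 ∈ Hsector k R2 θ2 ∧
        ‖w 0‖ ^ ((β2 - 1 / (d : ℝ)) / (k : ℝ)) <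
          ‖∏ j ∈ Finset.univ.erase (0 : Fin d), w j‖ ∧
        ∀ j : Fin d, j ≠ 0 →
          ‖w j‖ < ‖w 0‖ ^ ((1 / (d : ℝ) - β2) / (k : ℝ))} ⊆
      (fun z => (fun j : Fin d => if j = 0 then ψ z
        else ψ z ^ ((1 : ℂ) / ((k : ℂ) * (d : ℂ))) * σ j z)) '' Bset d k h R0 θ0 β0 :=
  stmt13_general d k l hk lam F R0 θ0 β0 hbasin h ψ hψre hψF σ hσne hσF R1 θ1 β1 hR1 hθ1 hβ1 hinjφ
    R2 θ2 β2 hR2 hT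
end
end

section
/- Fix an integer d≥1 and define a sequence (σ_r)_{r≥1} of positive reals by σ_1:=1 and, for r≥2, σ_r:=d·Σ_{k=2}^{r} Σ σ_{r_1}⋯σ_{r_k}, where the inner sum ranges over all ordered k-tuples (r_1,…,r_k) of positive integers with r_1+⋯+r_k=r. Then sup_{r≥1}(1/r)·log σ_r<∞; equivalently, there exists C>1 such that σ_r≤C^r for all r≥1. -/
/-!
Let `T_n = Σ_{c ⊨ n} ∏ σ_{c_i}` be the sum over all compositions of `n` and `P_n = T_n - σ_n` its
part over compositions with at least two blocks, so that the recurrence reads `σ_n = d P_n`.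
Splitting off the first block gives `P_{n+1} = Σ_{a<n} σ_{a+1} T_{n-a}`, hence
`T_{n+1} = (d + 1) Σ_{a<n} σ_{a+1} T_{n-a} ≤ (d + 1) Σ_{a<n} T_{a+1} T_{n-a}`
for `n ≥ 1`. This is the Catalan recurrence up to the factor `d + 1`, so
`σ_{n+1} ≤ T_{n+1} ≤ (d + 1)^n Cat_n ≤ (4 (d + 1))^n`.
-/

open Complex Metric Set Filter Topology Asymptotics

noncomputable section

open Finset

namespace Composition

def sigmaCons (n : ℕ) (p : Σ a : Fin (n + 1), Composition (n - a)) : Composition (n + 1) where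
  blocks := (p.1 + 1) :: p.2.blocks
  blocks_pos := by
    rintro i (_ | ⟨_, hi⟩)
    exacts [Nat.succ_pos _, p.2.blocks_pos hi]
  blocks_sum := by
    have := p.2.blocks_sum
    simp only [List.sum_cons, this]
    omega

lemma sigmaCons_injective (n : ℕ) : Function.Injective (sigmaCons n) := by
  rintro ⟨a, c⟩ ⟨a', c'⟩ h
  have hblocks := congrArg blocks h
  simp only [sigmaCons, List.cons.injEq] at hblocks
  obtain ⟨ha, hc⟩ := hblocks
  obtain rfl : a = a' := Fin.ext (by omega)
  obtain rfl : c = c' := Composition.ext hc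
  rfl

lemma sigmaCons_surjective (n : ℕ) : Function.Surjective (sigmaCons n) := by
  intro c
  obtain ⟨b, l, hc⟩ := List.exists_cons_of_ne_nil (mt c.blocks_eq_nil.1 n.succ_ne_zero)
  have hb : 0 < b := c.blocks_pos (by simp [hc])
  have hsum : b + l.sum = n + 1 := by simpa [hc] using c.blocks_sum
  refine ⟨⟨⟨b - 1, by omega⟩, ⟨l, fun hi => c.blocks_pos (by simp [hc, hi]), by simp; omega⟩⟩,
    Composition.ext ?_⟩
  simp only [sigmaCons, hc, List.cons.injEq, and_true]
  omega

lemma sigmaCons_bijective (n : ℕ) : Function.Bijective (sigmaCons n) :=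
  ⟨sigmaCons_injective n, sigmaCons_surjective n⟩

lemma prod_blocksFun {M : Type*} [CommMonoid M] (f : ℕ → M) {n : ℕ} (c : Composition n) :
    ∏ i, f (c.blocksFun i) = (c.blocks.map f).prod := by
  rw [← c.ofFn_blocksFun, List.map_ofFn, List.prod_ofFn]
  rfl

lemma blocksFun_lt_of_two_le_length {n : ℕ} (c : Composition n) (hc : 2 ≤ c.length)
    (i : Fin c.length) : c.blocksFun i < n := by
  obtain ⟨j, hji⟩ : ∃ j : Fin c.length, j ≠ i :=
    ⟨⟨if (i : ℕ) = 0 then 1 else 0, by split <;> omega⟩, fun h => by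
      have := congrArg Fin.val h; simp only at this; split at this <;> omega⟩
  calc c.blocksFun i < ∑ k, c.blocksFun k :=
        single_lt_sum hji (Finset.mem_univ _) (Finset.mem_univ _) (c.one_le_blocksFun j)
          fun _ _ _ => Nat.zero_le _
    _ = n := c.sum_blocksFun

end Composition

section CompositionSum

variable {R : Type*} [CommSemiring R]

/-- The `n`-th coefficient of `1 / (1 - Σ_{k ≥ 1} f k X^k)`. -/
def compositionSum (f : ℕ → R) (n : ℕ) : R :=
  ∑ c : Composition n, (c.blocks.map f).prod

lemma compositionSum_zero (f : ℕ → R) : compositionSum f 0 = 1 := by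
  have hblocks (c : Composition 0) : c.blocks = [] := c.blocks_eq_nil.2 rfl
  simp [compositionSum, hblocks, composition_card]

lemma compositionSum_succ (f : ℕ → R) (n : ℕ) :
    compositionSum f (n + 1) = ∑ a : Fin (n + 1), f (a + 1) * compositionSum f (n - a) := by
  rw [compositionSum, ← (Composition.sigmaCons_bijective n).sum_comp, ← Finset.univ_sigma_univ,
    sum_sigma]
  simp [Composition.sigmaCons, compositionSum, mul_sum]

lemma compositionSum_succ_eq_add (f : ℕ → R) (n : ℕ) :
    compositionSum f (n + 1) = f (n + 1) + ∑ a : Fin n, f (a + 1) * compositionSum f (n - a) := by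
  rw [compositionSum_succ, Fin.sum_univ_castSucc]
  simp [compositionSum_zero, add_comm]

end CompositionSum

lemma sum_prod_blocksFun_of_two_le_length {R : Type*} [CommRing R] (f : ℕ → R) (n : ℕ) :
    ∑ c : Composition (n + 1), (if 2 ≤ c.length then ∏ i, f (c.blocksFun i) else 0)
      = ∑ a : Fin n, f (a + 1) * compositionSum f (n - a) := by
  set single := Composition.single (n + 1) n.succ_pos
  have hfilter :
      univ.filter (fun c : Composition (n + 1) => 2 ≤ c.length) = univ.erase single := by
    ext c
    have := c.length_pos_iff.2 n.succ_pos
    simp only [mem_filter, Finset.mem_univ, true_and, mem_erase, ne_eq, single,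
      Composition.eq_single_iff_length, and_true]
    omega
  have hsplit := add_sum_erase univ (fun c => (c.blocks.map f).prod) (Finset.mem_univ single)
  rw [← compositionSum, compositionSum_succ_eq_add] at hsplit
  simp only [single, Composition.single_blocks, List.map_cons, List.map_nil, List.prod_cons,
    List.prod_nil, mul_one] at hsplit
  rw [← sum_filter, hfilter]
  simp_rw [Composition.prod_blocksFun]
  linear_combination hsplit

section Nonneg

variable {R : Type*} [CommSemiring R] [PartialOrder R] [IsOrderedRing R] {f : ℕ → R}

lemma prod_blocks_nonneg (hf : ∀ k, 0 < k → 0 ≤ f k) {n : ℕ} (c : Composition n) :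
    0 ≤ (c.blocks.map f).prod :=
  List.prod_nonneg (by simpa using fun k hk => hf k (c.blocks_pos hk))

lemma compositionSum_nonneg (hf : ∀ k, 0 < k → 0 ≤ f k) (n : ℕ) : 0 ≤ compositionSum f n :=
  sum_nonneg fun c _ => prod_blocks_nonneg hf c

lemma le_compositionSum (hf : ∀ k, 0 < k → 0 ≤ f k) {n : ℕ} (hn : 0 < n) :
    f n ≤ compositionSum f n := by
  simpa [compositionSum] using single_le_sum (fun c _ => prod_blocks_nonneg hf c)
    (Finset.mem_univ (Composition.single n hn))

end Nonneg

lemma catalan_le_four_pow (n : ℕ) : catalan n ≤ 4 ^ n :=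
  (catalan_eq_centralBinom_div n ▸ Nat.div_le_self _ _).trans (Nat.centralBinom_le_four_pow n)

lemma le_pow_mul_catalan {R : Type*} [CommSemiring R] [PartialOrder R] [IsOrderedRing R]
    {y : ℕ → R} {K : R} (hK : 0 ≤ K) (hy : ∀ n, 0 ≤ y n) (h0 : y 0 ≤ 1)
    (hrec : ∀ n, y (n + 1) ≤ K * ∑ i : Fin (n + 1), y i * y (n - i)) (n : ℕ) :
    y n ≤ K ^ n * catalan n := by
  induction n using Nat.strong_induction_on with
  | _ n ih =>
  cases n with
  | zero => simpa using h0
  | succ n =>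
    calc y (n + 1) ≤ K * ∑ i : Fin (n + 1), y i * y (n - i) := hrec n
      _ ≤ K * ∑ i : Fin (n + 1), (K ^ (i : ℕ) * catalan i) * (K ^ (n - i) * catalan (n - i)) := by
        gcongr with i
        · exact hy _
        · exact ih _ (by omega)
        · exact ih _ (by omega)
      _ = K ^ (n + 1) * catalan (n + 1) := by
        rw [catalan_succ, Nat.cast_sum, mul_sum, mul_sum]
        refine sum_congr rfl fun i _ => ?_
        rw [pow_succ', ← pow_mul_pow_sub K (show (i : ℕ) ≤ n by omega)]
        push_cast
        ring

lemma nonneg_of_composition_recurrence {d : ℕ} {σ : ℕ → ℝ} (hσ1 : σ 1 = 1)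
    (hrec : ∀ r : ℕ, 2 ≤ r → σ r = d * ∑ comp : Composition r,
      (if 2 ≤ comp.length then ∏ i : Fin comp.length, σ (comp.blocksFun i) else 0)) :
    ∀ r, 0 < r → 0 ≤ σ r := by
  intro r
  induction r using Nat.strong_induction_on with
  | _ r ih =>
  intro hr
  obtain rfl | hr2 : r = 1 ∨ 2 ≤ r := by omega
  · simp [hσ1]
  rw [hrec r hr2]
  refine mul_nonneg d.cast_nonneg (sum_nonneg fun c _ => ?_)
  split_ifs with hc
  · exact prod_nonneg fun i _ =>
      ih _ (c.blocksFun_lt_of_two_le_length hc i) (c.one_le_blocksFun i)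
  · exact le_rfl

lemma compositionSum_succ_le_of_composition_recurrence {d : ℕ} {σ : ℕ → ℝ} (hσ1 : σ 1 = 1)
    (hrec : ∀ r : ℕ, 2 ≤ r → σ r = d * ∑ comp : Composition r,
      (if 2 ≤ comp.length then ∏ i : Fin comp.length, σ (comp.blocksFun i) else 0))
    (n : ℕ) : compositionSum σ (n + 1) ≤ (d + 1) ^ n * catalan n := by
  have hσ := nonneg_of_composition_recurrence hσ1 hrec
  have hT (n : ℕ) : compositionSum σ (n + 2)
      = (d + 1) * ∑ a : Fin (n + 1), σ (a + 1) * compositionSum σ (n + 1 - a) := by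
    rw [compositionSum_succ_eq_add, hrec (n + 2) (by omega), sum_prod_blocksFun_of_two_le_length]
    ring
  refine le_pow_mul_catalan (y := fun n => compositionSum σ (n + 1)) (by positivity)
    (fun n => compositionSum_nonneg hσ _) (by simp [compositionSum_succ_eq_add, hσ1])
    (fun n => ?_) n
  rw [hT]
  gcongr with a
  · exact compositionSum_nonneg hσ _
  · exact compositionSum_nonneg hσ _
  · exact le_compositionSum hσ (Nat.succ_pos a)
  · exact (congrArg (compositionSum σ) (by omega)).le

theorem stmt18_general (d : ℕ) (σ : ℕ → ℝ) (hσ1 : σ 1 = 1)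
    (hrec : ∀ r : ℕ, 2 ≤ r → σ r = d * ∑ comp : Composition r,
      (if 2 ≤ comp.length then ∏ i : Fin comp.length, σ (comp.blocksFun i) else 0)) :
    ∃ C : ℝ, 1 < C ∧ ∀ r : ℕ, 1 ≤ r → σ r ≤ C ^ r := by
  have hσ := nonneg_of_composition_recurrence hσ1 hrec
  have hC : (1 : ℝ) < 4 * (d + 1) := by linarith [d.cast_nonneg (α := ℝ)]
  refine ⟨4 * (d + 1), hC, fun r hr => ?_⟩
  obtain ⟨n, rfl⟩ := Nat.exists_eq_add_of_le' hr
  calc σ (n + 1) ≤ compositionSum σ (n + 1) := le_compositionSum hσ n.succ_pos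
    _ ≤ (d + 1) ^ n * catalan n := compositionSum_succ_le_of_composition_recurrence hσ1 hrec n
    _ ≤ (d + 1) ^ n * 4 ^ n := by gcongr; exact_mod_cast catalan_le_four_pow n
    _ = (4 * (d + 1)) ^ n := by rw [mul_pow, mul_comm]
    _ ≤ (4 * (d + 1)) ^ (n + 1) := pow_le_pow_right₀ hC.le n.le_succ

/-- **Siegel–Sternberg estimate.** The sequence defined by `σ₁ = 1` and
`σ_r = d·Σ_{k=2}^r Σ_{r₁+⋯+r_k=r} σ_{r₁}⋯σ_{r_k}` (sum over ordered tuples of positive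
integers, i.e. compositions) grows at most exponentially. -/
theorem stmt18 (d : ℕ) (hd : 1 ≤ d) (σ : ℕ → ℝ) (hσ1 : σ 1 = 1)
    (hrec : ∀ r : ℕ, 2 ≤ r → σ r = d * ∑ comp : Composition r,
      (if 2 ≤ comp.length then ∏ i : Fin comp.length, σ (comp.blocksFun i) else 0)) :
    ∃ C : ℝ, 1 < C ∧ ∀ r : ℕ, 1 ≤ r → σ r ≤ C ^ r :=
  stmt18_general d σ hσ1 hrec
end
end
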